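/- arXiv:1008.4177 — 6 statements merged into one kernel-verified Lean document; each statement's English description precedes it below -/
import Mathlib

section
/- (Cross-addition constraint) Let W = [w_{i,j}] be a μ×η matrix over GF(q) and let H = f(W). Then no two distinct rows of H have entries equal to 1 in two or more common column positions (equivalently, the Tanner graph of H contains no cycle of length four) if and only if w_{i1,j1} + w_{i2,j2} ≠ w_{i1,j2} + w_{i2,j1} for all 1 ≤ i1, i2 ≤ μ and 1 ≤ j1, j2 ≤ η with i1 ≠ i2 and j1 ≠ j2. -/
/-- Cross-addition constraint: Let `W` be a `μ×η` matrix over the finite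
field `F` and let `H` be the block matrix whose `((i,r),(j,s))` entry is the `(r,s)` entry
of `f (W i j)`, i.e. 1 iff `r - s = W i j`. Then no two distinct rows of `H` have entries
equal to 1 in two or more common column positions (equivalently, the Tanner graph of `H`
has no four-cycle) iff `W i1 j1 + W i2 j2 ≠ W i1 j2 + W i2 j1` whenever `i1 ≠ i2` and
`j1 ≠ j2`. -/
theorem cross_addition_constraint
    {F : Type*} [Field F] [Fintype F] [DecidableEq F]
    (μ η : ℕ) (W : Fin μ → Fin η → F)
    (H : Matrix (Fin μ × F) (Fin η × F) (ZMod 2))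
    (hH : ∀ i r j s, H (i, r) (j, s) = if r - s = W i j then 1 else 0) :
    (∀ r1 r2 : Fin μ × F, r1 ≠ r2 → ∀ c1 c2 : Fin η × F, c1 ≠ c2 →
      ¬ (H r1 c1 = 1 ∧ H r1 c2 = 1 ∧ H r2 c1 = 1 ∧ H r2 c2 = 1)) ↔
    (∀ i1 i2 : Fin μ, ∀ j1 j2 : Fin η, i1 ≠ i2 → j1 ≠ j2 →
      W i1 j1 + W i2 j2 ≠ W i1 j2 + W i2 j1) := by
  have hone : ∀ i r j s, H (i, r) (j, s) = 1 ↔ r - s = W i j := by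
    intro i r j s
    rw [hH]
    split_ifs with h
    · simp [h]
    · simp [h]
  constructor
  · intro hfree i1 i2 j1 j2 hi hj heq
    apply hfree (i1, 0) (i2, W i2 j1 - W i1 j1) (by simp [Prod.ext_iff, hi])
      (j1, -W i1 j1) (j2, -W i1 j2) (by simp [Prod.ext_iff, hj])
    refine ⟨?_, ?_, ?_, ?_⟩ <;> rw [hone]
    · ring
    · ring
    · ring
    · linear_combination -heq
  · rintro hW ⟨i1, r1⟩ ⟨i2, r2⟩ hr ⟨j1, s1⟩ ⟨j2, s2⟩ hc ⟨h11, h12, h21, h22⟩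
    rw [hone] at h11 h12 h21 h22
    rcases eq_or_ne i1 i2 with hi | hi
    · subst hi
      have : r1 = r2 := by linear_combination h11 - h21
      exact hr (by simp [this])
    rcases eq_or_ne j1 j2 with hj | hj
    · subst hj
      have : s1 = s2 := by linear_combination h12 - h11
      exact hc (by simp [this])
    exact hW i1 i2 j1 j2 hi hj (by linear_combination h12 + h21 - h11 - h22)
end

section
/- Let W be the q×q matrix over GF(q), with rows and columns indexed by GF(q), whose (x,y) entry is x·y (the multiplication table of GF(q), including the all-zero row and column). Then W satisfies the cross-addition constraint, i.e., for all x1 ≠ x2 and y1 ≠ y2 in GF(q), x1·y1 + x2·y2 ≠ x1·y2 + x2·y1; consequently, no two distinct rows of the q²×q² binary block matrix 𝓗 = f(W) have entries equal to 1 in two or more common column positions, i.e., the Tanner graph of 𝓗 contains no cycle of length four. -/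
/-- The multiplication table `W (x,y) = x·y` of a finite field `F` satisfies
the cross-addition constraint: for `x1 ≠ x2` and `y1 ≠ y2`,
`x1·y1 + x2·y2 ≠ x1·y2 + x2·y1`. Consequently, in the `q²×q²` block matrix `𝓗 = f(W)`
(whose `((x,r),(y,s))` entry is 1 iff `r - s = x·y`), no two distinct rows have entries 1
in two or more common column positions, i.e. its Tanner graph has no four-cycle. -/
theorem multiplication_table_cross_addition
    {F : Type*} [Field F] [Fintype F] [DecidableEq F]
    (H : Matrix (F × F) (F × F) (ZMod 2))
    (hH : ∀ x r y s, H (x, r) (y, s) = if r - s = x * y then 1 else 0) :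
    (∀ x1 x2 y1 y2 : F, x1 ≠ x2 → y1 ≠ y2 →
      x1 * y1 + x2 * y2 ≠ x1 * y2 + x2 * y1) ∧
    (∀ r1 r2 : F × F, r1 ≠ r2 → ∀ c1 c2 : F × F, c1 ≠ c2 →
      ¬ (H r1 c1 = 1 ∧ H r1 c2 = 1 ∧ H r2 c1 = 1 ∧ H r2 c2 = 1)) := by
  constructor
  · intro x1 x2 y1 y2 hx hy h
    have : (x1 - x2) * (y1 - y2) = 0 := by ring_nf; linear_combination h
    rcases mul_eq_zero.mp this with h' | h'
    · exact hx (sub_eq_zero.mp h')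
    · exact hy (sub_eq_zero.mp h')
  · rintro ⟨x1, r1⟩ ⟨x2, r2⟩ hr ⟨y1, s1⟩ ⟨y2, s2⟩ hc ⟨h11, h12, h21, h22⟩
    rw [hH] at h11 h12 h21 h22
    have e11 : r1 - s1 = x1 * y1 := by by_contra h; simp [h] at h11
    have e12 : r1 - s2 = x1 * y2 := by by_contra h; simp [h] at h12
    have e21 : r2 - s1 = x2 * y1 := by by_contra h; simp [h] at h21
    have e22 : r2 - s2 = x2 * y2 := by by_contra h; simp [h] at h22
    have key : (x1 - x2) * (y1 - y2) = 0 := by linear_combination e12 + e21 - e11 - e22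
    rcases mul_eq_zero.mp key with h' | h'
    · have hx : x1 = x2 := sub_eq_zero.mp h'
      have : r1 = r2 := by
        have h := e11.trans (hx ▸ e21.symm)
        have := congrArg (· + s1) h; simpa using this
      exact hr (by rw [hx, this])
    · have hy : y1 = y2 := sub_eq_zero.mp h'
      have : s1 = s2 := by
        have h := e11.trans (hy ▸ e12.symm)
        have := congrArg (fun t => r1 - t) (sub_right_injective h)
        exact (sub_right_injective h).symm ▸ rfl
      exact hc (by rw [hy, this])
end

section
/- Let G be a finite bipartite graph whose vertex classes are variable nodes and check nodes, in which every variable node has degree d_v ≥ 3. Let T be a nonempty set of variable nodes and let I be the subgraph of G induced by T together with all check nodes adjacent to some element of T. If every variable node in T has at least ⌈d_v/2⌉ neighboring check nodes whose degree in I is even, then I contains a cycle (i.e., I is not a forest). -/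
/-!
Keep only the edges of `I` at check nodes of even degree. In this subgraph every variable node
of `T` still has `⌈d_v/2⌉ ≥ 2` neighbours, and a check node that keeps one edge keeps all of its
(evenly many, hence at least two) edges. A finite forest with an edge always has a leaf, so this
subgraph, and with it `I`, contains a cycle.
-/

/-- Lives on all of `V ⊕ C`: nodes not adjacent to `T` are kept as isolated vertices. -/
def inducedSubgraph {V C : Type*} (E : V → C → Prop) (T : Set V) :
    SimpleGraph (V ⊕ C) :=
  SimpleGraph.fromRel (fun x y =>
    ∃ v c, x = Sum.inl v ∧ y = Sum.inr c ∧ v ∈ T ∧ E v c)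

open SimpleGraph

/-- The first vertex of a longest path is a leaf: a second neighbour would either close a cycle
with the path or extend it. -/
theorem SimpleGraph.not_isAcyclic_of_forall_adj_exists_ne {W : Type*} (G : SimpleGraph W)
    [Finite G.edgeSet] {a b : W} (hab : G.Adj a b)
    (hdeg : ∀ u v, G.Adj u v → ∃ w, w ≠ v ∧ G.Adj u w) : ¬ G.IsAcyclic := by
  intro hG
  have : Nonempty W := ⟨a⟩
  obtain ⟨u, v, p, hp, hmax⟩ := Walk.exists_isPath_forall_isPath_length_le_length G
  have hnil : ¬ p.Nil := by
    have := hmax a b (Walk.cons hab .nil) (by simp [hab.ne])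
    simp only [Walk.length_cons, Walk.length_nil] at this
    exact Walk.not_nil_iff_lt_length.mpr this
  obtain ⟨w, hw, huw⟩ := hdeg u p.snd (p.adj_snd hnil)
  by_cases hwp : w ∈ p.support
  · exact hw (hG.eq_snd_of_adj_start hp huw hwp)
  · have := hmax w v (Walk.cons huw.symm p) (hp.cons hwp)
    simp at this

namespace inducedSubgraph

variable {V C : Type*} {E E' : V → C → Prop} {T : Set V}

@[simp]
theorem adj_inl_inr {v : V} {c : C} :
    (inducedSubgraph E T).Adj (.inl v) (.inr c) ↔ v ∈ T ∧ E v c := by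
  simp [inducedSubgraph]

@[simp]
theorem adj_inr_inl {v : V} {c : C} :
    (inducedSubgraph E T).Adj (.inr c) (.inl v) ↔ v ∈ T ∧ E v c := by
  simp [inducedSubgraph]

@[simp]
theorem not_adj_inl_inl {u v : V} : ¬ (inducedSubgraph E T).Adj (.inl u) (.inl v) := by
  simp [inducedSubgraph]

@[simp]
theorem not_adj_inr_inr {c d : C} : ¬ (inducedSubgraph E T).Adj (.inr c) (.inr d) := by
  simp [inducedSubgraph]

theorem mono (h : ∀ v c, E v c → E' v c) : inducedSubgraph E T ≤ inducedSubgraph E' T := by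
  rintro (u | c) (v | d) hadj <;> simp_all

instance finite_edgeSet [Finite T] [Finite C] : Finite (inducedSubgraph E T).edgeSet := by
  refine Set.Finite.subset (Set.finite_range fun p : T × C => s(.inl p.1, .inr p.2)) ?_
  rintro ⟨u | c, v | d⟩ h <;> simp_all

theorem not_isAcyclic [Finite T] [Finite C] (hE : ∃ v ∈ T, ∃ c, E v c)
    (hV : ∀ v ∈ T, ∀ c, E v c → ∃ c', c' ≠ c ∧ E v c')
    (hC : ∀ c, ∀ v ∈ T, E v c → ∃ u ∈ T, u ≠ v ∧ E u c) :
    ¬ (inducedSubgraph E T).IsAcyclic := by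
  obtain ⟨v, hv, c, hvc⟩ := hE
  refine not_isAcyclic_of_forall_adj_exists_ne _ (adj_inl_inr.mpr ⟨hv, hvc⟩) ?_
  rintro (u | c) (v | d) hadj
  · simp at hadj
  · obtain ⟨hu, hud⟩ := adj_inl_inr.mp hadj
    obtain ⟨d', hd', hud'⟩ := hV u hu d hud
    exact ⟨.inr d', by simpa using hd', adj_inl_inr.mpr ⟨hu, hud'⟩⟩
  · obtain ⟨hv, hvc⟩ := adj_inr_inl.mp hadj
    obtain ⟨u, hu, huv, huc⟩ := hC c v hv hvc
    exact ⟨.inl u, by simpa using huv, adj_inr_inl.mpr ⟨hu, huc⟩⟩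
  · simp at hadj

end inducedSubgraph

theorem Finset.exists_mem_ne_of_even_card {α : Type*} {s : Finset α} {a : α} (hs : Even s.card)
    (ha : a ∈ s) : ∃ b ∈ s, b ≠ a := by
  have : s.card ≠ 1 := fun h => by simp [h] at hs
  exact s.exists_mem_ne (by have := Finset.card_pos.mpr ⟨a, ha⟩; omega) a

theorem induced_subgraph_has_cycle_general
    {V C : Type*} [Fintype C]
    (E : V → C → Prop) [∀ v c, Decidable (E v c)]
    (dv : ℕ) (hdv : 3 ≤ dv)
    (T : Finset V) (hT : T.Nonempty)
    (hEven : ∀ v ∈ T,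
      (dv + 1) / 2 ≤
        ((Finset.univ : Finset C).filter (fun c =>
          E v c ∧ Even ((T.filter (fun u => E u c)).card))).card) :
    ¬ (inducedSubgraph E (↑T : Set V)).IsAcyclic := by
  set Eeven : V → C → Prop := fun v c => E v c ∧ Even (T.filter (E · c)).card
  have htwo : ∀ v ∈ T, 1 < (Finset.univ.filter (Eeven v)).card := fun v hv =>
    lt_of_lt_of_le (by omega) (hEven v hv)
  refine fun hI => inducedSubgraph.not_isAcyclic (E := Eeven) ?_ ?_ ?_
    (hI.anti (inducedSubgraph.mono fun _ _ h => h.1))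
  · obtain ⟨v, hv⟩ := hT
    obtain ⟨c, hc⟩ := Finset.card_pos.mp (zero_lt_one.trans (htwo v hv))
    exact ⟨v, hv, c, (Finset.mem_filter.mp hc).2⟩
  · intro v hv c _
    obtain ⟨c', hc', hne⟩ := Finset.exists_mem_ne (htwo v hv) c
    exact ⟨c', hne, (Finset.mem_filter.mp hc').2⟩
  · rintro c v hv ⟨hvc, heven⟩
    obtain ⟨u, hu, huv⟩ := Finset.exists_mem_ne_of_even_card heven
      (Finset.mem_filter.mpr ⟨hv, hvc⟩)
    rw [Finset.mem_filter] at hu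
    exact ⟨u, hu.1, huv, hu.2, heven⟩

/-- In a finite bipartite graph where every variable node has degree
`dv ≥ 3`, if `T` is a nonempty set of variable nodes such that every variable node in `T`
has at least `⌈dv/2⌉` neighboring check nodes whose degree in the subgraph induced by `T`
is even, then that induced subgraph contains a cycle (is not acyclic). -/
theorem induced_subgraph_has_cycle
    {V C : Type*} [Fintype V] [Fintype C]
    (E : V → C → Prop) [∀ v c, Decidable (E v c)]
    (dv : ℕ) (hdv : 3 ≤ dv)
    (hdeg : ∀ v : V, ((Finset.univ : Finset C).filter (fun c => E v c)).card = dv)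
    (T : Finset V) (hT : T.Nonempty)
    (hEven : ∀ v ∈ T,
      (dv + 1) / 2 ≤
        ((Finset.univ : Finset C).filter (fun c =>
          E v c ∧ Even ((T.filter (fun u => E u c)).card))).card) :
    ¬ (inducedSubgraph E (↑T : Set V)).IsAcyclic :=
  induced_subgraph_has_cycle_general E dv hdv T hT hEven
end

section
/- (Cross-multiplication constraint) Let W = [w_{i,j}] be a μ×η matrix over the multiplicative group GF(q)* of nonzero elements of GF(q), and let H = f×(W) be the μ(q−1)×η(q−1) binary matrix obtained by replacing each entry w_{i,j} by the (q−1)×(q−1) block f×(w_{i,j}). Then no two distinct rows of H have entries equal to 1 in two or more common column positions (equivalently, the Tanner graph of H contains no cycle of length four) if and only if w_{i1,j1}·w_{i2,j2} ≠ w_{i1,j2}·w_{i2,j1} for all 1 ≤ i1, i2 ≤ μ and 1 ≤ j1, j2 ≤ η with i1 ≠ i2 and j1 ≠ j2. -/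
/-- Cross-multiplication constraint: Let `W` be a `μ×η` matrix over the
multiplicative group `Fˣ` of the finite field `F = GF(q)`, and let `H` be the
`μ(q−1) × η(q−1)` binary block matrix whose `((i,r),(j,s))` entry is 1 iff
`r * s⁻¹ = W i j`. Then no two distinct rows of `H` have entries equal to 1 in two or
more common column positions (equivalently, the Tanner graph of `H` has no four-cycle)
iff `W i1 j1 * W i2 j2 ≠ W i1 j2 * W i2 j1` whenever `i1 ≠ i2` and `j1 ≠ j2`. -/
theorem cross_multiplication_constraint
    {F : Type*} [Field F] [Fintype F] [DecidableEq F]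
    (μ η : ℕ) (W : Fin μ → Fin η → Fˣ)
    (H : Matrix (Fin μ × Fˣ) (Fin η × Fˣ) (ZMod 2))
    (hH : ∀ i r j s, H (i, r) (j, s) = if r * s⁻¹ = W i j then 1 else 0) :
    (∀ r1 r2 : Fin μ × Fˣ, r1 ≠ r2 → ∀ c1 c2 : Fin η × Fˣ, c1 ≠ c2 →
      ¬ (H r1 c1 = 1 ∧ H r1 c2 = 1 ∧ H r2 c1 = 1 ∧ H r2 c2 = 1)) ↔
    (∀ i1 i2 : Fin μ, ∀ j1 j2 : Fin η, i1 ≠ i2 → j1 ≠ j2 →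
      W i1 j1 * W i2 j2 ≠ W i1 j2 * W i2 j1) := by
  have h1 : ∀ i r j s, H (i, r) (j, s) = 1 ↔ r * s⁻¹ = W i j := by
    intro i r j s
    rw [hH]
    split <;> simp_all
  constructor
  · intro h i1 i2 j1 j2 hi hj heq
    apply h (i1, W i1 j1) (i2, W i2 j1)
      (by simp [Prod.ext_iff]; intro hc; exact absurd hc hi)
      (j1, 1) (j2, W i1 j1 * (W i1 j2)⁻¹)
      (by simp [Prod.ext_iff]; intro hc; exact absurd hc hj)
    refine ⟨(h1 _ _ _ _).2 (by simp), (h1 _ _ _ _).2 (by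
        simp [mul_inv_rev, mul_comm, mul_left_comm, mul_assoc]),
      (h1 _ _ _ _).2 (by simp), (h1 _ _ _ _).2 ?_⟩
    have : W i2 j2 * W i1 j1 = W i2 j1 * W i1 j2 := by
      rw [mul_comm, heq, mul_comm]
    calc W i2 j1 * (W i1 j1 * (W i1 j2)⁻¹)⁻¹
        = (W i2 j1 * W i1 j2) * (W i1 j1)⁻¹ := by
          simp [mul_inv_rev, mul_comm, mul_left_comm, mul_assoc]
      _ = (W i2 j2 * W i1 j1) * (W i1 j1)⁻¹ := by rw [this]
      _ = W i2 j2 := by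
          simp [mul_comm, mul_left_comm, mul_assoc]
  · rintro h ⟨i1, r⟩ ⟨i2, r'⟩ hr ⟨j1, s1⟩ ⟨j2, s2⟩ hc ⟨e11, e12, e21, e22⟩
    rw [h1] at e11 e12 e21 e22
    by_cases hi : i1 = i2
    · subst hi
      have : r = r' := by
        have := e11.trans e21.symm
        exact mul_right_cancel this
      exact hr (by simp [Prod.ext_iff, this])
    · by_cases hj : j1 = j2
      · subst hj
        have : s1 = s2 := by
          have := e11.trans e12.symm
          have := mul_left_cancel this
          exact inv_injective this
        exact hc (by simp [Prod.ext_iff, this])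
      · exact h i1 i2 j1 j2 hi hj (by
          rw [← e11, ← e22, ← e12, ← e21]
          simp [mul_comm, mul_left_comm, mul_assoc])
end

section
/- Let q = 2^ϑ with ϑ ∈ ℕ, ϑ > 1. Let W be any 3×ρ matrix over GF(q) with ρ ≥ 2 and let H = f(W) be the corresponding 3q×ρq binary block matrix. Then the binary linear code C = { y ∈ GF(2)^{ρq} : y·Hᵀ = 0 } has minimum distance at most 8; that is, there exists a nonzero vector y with y·Hᵀ = 0 whose Hamming weight is at most 8. -/
/-!
Pick two block columns `j₀ ≠ j₁` and put `t i = W i j₀ - W i j₁`. A word supported on `A` in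
block `j₀` and on `B` in block `j₁` is a codeword as soon as `B = t i + A` for every row `i`, that
is, as soon as `A` is stable under translation by the differences `t i - t 0` and `B = t 0 + A`.
Take for `A` the subgroup generated by these differences: in characteristic 2 it is the
`𝔽₂`-span of two vectors, so `|A| ≤ 4` and the word has weight `2 |A| ≤ 8`.
-/

open Matrix Set
open scoped Pointwise

section TranslationBlockMatrix

variable {ι κ G : Type*} [AddCommGroup G] [DecidableEq G]

/-- The binary matrix `f(W)`: block `(i, j)` is the permutation matrix of translation by
`W i j`. -/
def translationBlockMatrix (W : ι → κ → G) : Matrix (ι × G) (κ × G) (ZMod 2) :=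
  fun p q => if p.2 - q.2 = W p.1 q.1 then 1 else 0

theorem translationBlockMatrix_mulVec_apply [Fintype κ] [Fintype G] (W : ι → κ → G)
    (y : κ × G → ZMod 2) (i : ι) (r : G) :
    (translationBlockMatrix W *ᵥ y) (i, r) = ∑ j, y (j, r - W i j) := by
  have hs : ∀ j s, r - s = W i j ↔ r - W i j = s := fun _ _ => by
    rw [sub_eq_iff_eq_add, ← sub_eq_iff_eq_add']
  simp only [mulVec, dotProduct, Fintype.sum_prod_type, translationBlockMatrix, ite_mul, one_mul,
    zero_mul, hs, Finset.sum_ite_eq, Finset.mem_univ, if_true]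

end TranslationBlockMatrix

section CosetPair

variable {κ G : Type*} [AddCommGroup G]

def cosetPairSupport (j₀ j₁ : κ) (K : AddSubgroup G) (c : G) : Set (κ × G) :=
  {j₀} ×ˢ K ∪ {j₁} ×ˢ (c +ᵥ (K : Set G))

theorem ncard_cosetPairSupport_le (j₀ j₁ : κ) (K : AddSubgroup G) (c : G) :
    (cosetPairSupport j₀ j₁ K c).ncard ≤ 2 * Nat.card K := by
  calc (cosetPairSupport j₀ j₁ K c).ncard
      ≤ ({j₀} ×ˢ (K : Set G)).ncard + ({j₁} ×ˢ (c +ᵥ (K : Set G))).ncard := ncard_union_le _ _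
    _ = 2 * Nat.card K := by
      rw [ncard_prod, ncard_prod, ncard_vadd_set, ncard_singleton, ncard_singleton,
        ← Nat.card_coe_set_eq, SetLike.coe_sort_coe]
      ring

theorem translationBlockMatrix_mulVec_cosetPair_eq_zero {ι : Type*} [Fintype κ] [Fintype G]
    [DecidableEq G] (W : ι → κ → G) {j₀ j₁ : κ} (hj : j₀ ≠ j₁) {K : AddSubgroup G} {c : G}
    (hW : ∀ i, W i j₀ - W i j₁ - c ∈ K) :
    translationBlockMatrix W *ᵥ (cosetPairSupport j₀ j₁ K c).indicator 1 = 0 := by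
  ext ⟨i, r⟩
  have hmem : r - W i j₁ ∈ c +ᵥ (K : Set G) ↔ r - W i j₀ ∈ K := by
    have hshift : -c + (r - W i j₁) = r - W i j₀ + (W i j₀ - W i j₁ - c) := by abel
    rw [mem_vadd_set_iff_neg_vadd_mem, vadd_eq_add, SetLike.mem_coe, hshift,
      K.add_mem_cancel_right (hW i)]
  rw [Pi.zero_apply, translationBlockMatrix_mulVec_apply, Fintype.sum_eq_add j₀ j₁ hj]
  · have h₀ : (j₀, r - W i j₀) ∈ cosetPairSupport j₀ j₁ K c ↔ r - W i j₀ ∈ K := by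
      simp [cosetPairSupport, hj]
    have h₁ : (j₁, r - W i j₁) ∈ cosetPairSupport j₀ j₁ K c ↔ r - W i j₀ ∈ K := by
      simp [cosetPairSupport, hj.symm, hmem]
    by_cases hx : r - W i j₀ ∈ K
    · rw [indicator_of_mem (h₀.2 hx), indicator_of_mem (h₁.2 hx)]
      rfl
    · rw [indicator_of_notMem (mt h₀.1 hx), indicator_of_notMem (mt h₁.1 hx), add_zero]
  · rintro j ⟨hj₀, hj₁⟩
    simp [cosetPairSupport, hj₀, hj₁]

end CosetPair

theorem natCard_span_range_le {K V ι : Type*} [Field K] [Finite K] [AddCommGroup V] [Module K V]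
    [Finite V] [Fintype ι] (v : ι → V) :
    Nat.card (Submodule.span K (range v)) ≤ Nat.card K ^ Fintype.card ι := by
  rw [Module.natCard_eq_pow_finrank (K := K)]
  exact Nat.pow_le_pow_right Nat.card_pos (finrank_range_le_card v)

theorem exists_translationBlockMatrix_mulVec_eq_zero {κ G : Type*} [Fintype κ] [AddCommGroup G]
    [Module (ZMod 2) G] [Fintype G] [DecidableEq G] {m : ℕ} (W : Fin (m + 1) → κ → G)
    {j₀ j₁ : κ} (hj : j₀ ≠ j₁) :
    ∃ y : κ × G → ZMod 2, y ≠ 0 ∧ translationBlockMatrix W *ᵥ y = 0 ∧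
      (Finset.univ.filter fun p => y p ≠ 0).card ≤ 2 ^ (m + 1) := by
  set t : Fin (m + 1) → G := fun i => W i j₀ - W i j₁
  set K := (Submodule.span (ZMod 2) (range fun k : Fin m => t k.succ - t 0)).toAddSubgroup
  have hW : ∀ i, W i j₀ - W i j₁ - t 0 ∈ K :=
    Fin.cases (by simp [t]) fun k => Submodule.subset_span (mem_range_self k)
  set S := cosetPairSupport j₀ j₁ K (t 0)
  refine ⟨S.indicator 1, fun h => ?_, translationBlockMatrix_mulVec_cosetPair_eq_zero W hj hW, ?_⟩
  · have h₀ : ((j₀, 0) : κ × G) ∈ S := Or.inl ⟨rfl, K.zero_mem⟩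
    simpa [indicator_of_mem h₀] using congrFun h (j₀, 0)
  · calc (Finset.univ.filter fun p => S.indicator (1 : κ × G → ZMod 2) p ≠ 0).card
        = S.ncard := by
          rw [← ncard_coe_finset]
          congr 1
          ext p
          simp
      _ ≤ 2 * Nat.card K := ncard_cosetPairSupport_le j₀ j₁ K (t 0)
      _ ≤ 2 * 2 ^ m := by
        gcongr
        exact (natCard_span_range_le (K := ZMod 2) fun k : Fin m => t k.succ - t 0).trans_eq
          (by rw [Nat.card_zmod, Fintype.card_fin])
      _ = 2 ^ (m + 1) := by ring

theorem FiniteField.two_eq_zero_of_card_eq_two_pow {F : Type*} [Field F] [Fintype F] {n : ℕ}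
    (h : Fintype.card F = 2 ^ n) : (2 : F) = 0 := by
  have := FiniteField.cast_card_eq_zero F
  rw [h, Nat.cast_pow, Nat.cast_ofNat] at this
  exact eq_zero_of_pow_eq_zero this

theorem min_distance_at_most_eight_general
    {F : Type*} [Field F] [Fintype F] [DecidableEq F]
    (ϑ : ℕ) (hcard : Fintype.card F = 2 ^ ϑ)
    (ρ : ℕ) (hρ : 2 ≤ ρ)
    (W : Fin 3 → Fin ρ → F)
    (H : Matrix (Fin 3 × F) (Fin ρ × F) (ZMod 2))
    (hH : ∀ i r j s, H (i, r) (j, s) = if r - s = W i j then 1 else 0) :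
    ∃ y : Fin ρ × F → ZMod 2, y ≠ 0 ∧ H.mulVec y = 0 ∧
      (Finset.univ.filter (fun c => y c ≠ 0)).card ≤ 8 := by
  let : Module (ZMod 2) F := AddCommGroup.zmodModule fun x => by
    rw [nsmul_eq_mul, Nat.cast_ofNat, FiniteField.two_eq_zero_of_card_eq_two_pow hcard, zero_mul]
  have hHW : H = translationBlockMatrix W := by
    ext ⟨i, r⟩ ⟨j, s⟩
    exact hH i r j s
  have h01 : (⟨0, by omega⟩ : Fin ρ) ≠ ⟨1, by omega⟩ := by simp
  subst hHW
  exact exists_translationBlockMatrix_mulVec_eq_zero (m := 2) W h01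

/-- Let `F = GF(2^ϑ)` with `ϑ > 1`, let `W` be any `3×ρ` matrix over `F`
with `ρ ≥ 2`, and let `H` be the `3q × ρq` binary block matrix whose `((i,r),(j,s))`
entry is 1 iff `r - s = W i j`. Then the binary code `{y : y·Hᵀ = 0}` has minimum
distance at most 8: there is a nonzero vector `y` with `H.mulVec y = 0` of Hamming
weight at most 8. -/
theorem min_distance_at_most_eight
    {F : Type*} [Field F] [Fintype F] [DecidableEq F]
    (ϑ : ℕ) (hϑ : 1 < ϑ) (hcard : Fintype.card F = 2 ^ ϑ)
    (ρ : ℕ) (hρ : 2 ≤ ρ)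
    (W : Fin 3 → Fin ρ → F)
    (H : Matrix (Fin 3 × F) (Fin ρ × F) (ZMod 2))
    (hH : ∀ i r j s, H (i, r) (j, s) = if r - s = W i j then 1 else 0) :
    ∃ y : Fin ρ × F → ZMod 2, y ≠ 0 ∧ H.mulVec y = 0 ∧
      (Finset.univ.filter (fun c => y c ≠ 0)).card ≤ 8 :=
  min_distance_at_most_eight_general ϑ hcard ρ hρ W H hH
end

section
/- Let q = 2^ϑ with ϑ ∈ ℕ, ϑ > 1. Let W be any 3×ρ matrix over GF(q) with ρ ≥ 2 and let H = f(W) be the corresponding 3q×ρq binary block matrix. Then the Tanner graph of H has girth at most 8, i.e., it contains a cycle of length at most 8. -/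
/-- The Tanner graph of a binary matrix `H`: the bipartite simple graph on
`m ⊕ n` (check nodes ⊕ variable nodes) where check node `i` is adjacent to variable
node `j` iff `H i j = 1`. -/
def tannerGraph {m n : Type*} (H : Matrix m n (ZMod 2)) : SimpleGraph (m ⊕ n) :=
  SimpleGraph.fromRel (fun x y =>
    ∃ i j, x = Sum.inl i ∧ y = Sum.inr j ∧ H i j = 1)

lemma tanner_adj_aux {m n : Type*} (H : Matrix m n (ZMod 2)) {i : m} {j : n}
    (h : H i j = 1) : (tannerGraph H).Adj (Sum.inl i) (Sum.inr j) :=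
  ⟨by simp, Or.inl ⟨i, j, rfl, rfl, h⟩⟩

/-- Let `F = GF(2^ϑ)` with `ϑ > 1`, let `W` be any `3×ρ` matrix over `F`
with `ρ ≥ 2`, and let `H` be the `3q × ρq` binary block matrix whose `((i,r),(j,s))`
entry is 1 iff `r - s = W i j`. Then the Tanner graph of `H` has girth at most 8, i.e.
it contains a cycle of length at most 8. -/
theorem girth_at_most_eight
    {F : Type*} [Field F] [Fintype F] [DecidableEq F]
    (ϑ : ℕ) (hϑ : 1 < ϑ) (hcard : Fintype.card F = 2 ^ ϑ)
    (ρ : ℕ) (hρ : 2 ≤ ρ)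
    (W : Fin 3 → Fin ρ → F)
    (H : Matrix (Fin 3 × F) (Fin ρ × F) (ZMod 2))
    (hH : ∀ i r j s, H (i, r) (j, s) = if r - s = W i j then 1 else 0) :
    ∃ (v : (Fin 3 × F) ⊕ (Fin ρ × F)) (w : (tannerGraph H).Walk v v),
      w.IsCycle ∧ w.length ≤ 8 := by
  -- characteristic 2
  have h2 : (2:F) = 0 := by
    have hdvd : (2:ℕ) ∣ Fintype.card F := by rw [hcard]; exact dvd_pow_self 2 (by omega)
    haveI : Fact (Nat.Prime 2) := ⟨Nat.prime_two⟩
    have h1 : (2:ℕ) ∣ ringChar F := (prime_dvd_char_iff_dvd_card 2).2 hdvd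
    have hp : (ringChar F).Prime := CharP.char_is_prime F (ringChar F)
    have hc : ringChar F = 2 := ((Nat.prime_dvd_prime_iff_eq Nat.prime_two hp).1 h1).symm
    have := (ringChar.spec F 2).2 (hc ▸ dvd_refl _)
    simpa using this
  have hj0 : (0:ℕ) < ρ := by omega
  have hj1 : (1:ℕ) < ρ := by omega
  let j0 : Fin ρ := ⟨0, hj0⟩
  let j1 : Fin ρ := ⟨1, hj1⟩
  have hE : ∀ (i : Fin 3) (r : F) (j : Fin ρ) (s : F), r - s = W i j → H (i, r) (j, s) = 1 := by
    intro i r j s h; rw [hH]; simp [h]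
  by_cases hδ : W 0 j0 + W 0 j1 + W 1 j0 + W 1 j1 = 0
  · -- 4-cycle
    have hab : (tannerGraph H).Adj (Sum.inl ((0:Fin 3), W 0 j0)) (Sum.inr (j0, (0:F))) :=
      tanner_adj_aux H (hE _ _ _ _ (by ring))
    have hcb : (tannerGraph H).Adj (Sum.inl ((1:Fin 3), W 1 j0)) (Sum.inr (j0, (0:F))) :=
      tanner_adj_aux H (hE _ _ _ _ (by ring))
    have hcd : (tannerGraph H).Adj (Sum.inl ((1:Fin 3), W 1 j0))
        (Sum.inr (j1, W 1 j0 - W 1 j1)) :=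
      tanner_adj_aux H (hE _ _ _ _ (by ring))
    have had : (tannerGraph H).Adj (Sum.inl ((0:Fin 3), W 0 j0))
        (Sum.inr (j1, W 1 j0 - W 1 j1)) :=
      tanner_adj_aux H (hE _ _ _ _ (by linear_combination hδ - (W 1 j0 + W 0 j1) * h2))
    refine ⟨_, SimpleGraph.Walk.cons hab (SimpleGraph.Walk.cons hcb.symm
        (SimpleGraph.Walk.cons hcd (SimpleGraph.Walk.cons had.symm SimpleGraph.Walk.nil))),
        ?_, by simp⟩
    rw [SimpleGraph.Walk.cons_isCycle_iff]
    constructor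
    · simp [SimpleGraph.Walk.cons_isPath_iff, j0, j1]
    · simp [j0, j1]
  · -- 8-cycle
    have h11 : (tannerGraph H).Adj (Sum.inl ((0:Fin 3), W 0 j0)) (Sum.inr (j0, (0:F))) :=
      tanner_adj_aux H (hE _ _ _ _ (by ring))
    have h21 : (tannerGraph H).Adj (Sum.inl ((1:Fin 3), W 1 j0)) (Sum.inr (j0, (0:F))) :=
      tanner_adj_aux H (hE _ _ _ _ (by ring))
    have h22 : (tannerGraph H).Adj (Sum.inl ((1:Fin 3), W 1 j0))
        (Sum.inr (j1, W 1 j0 - W 1 j1)) :=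
      tanner_adj_aux H (hE _ _ _ _ (by ring))
    have h32 : (tannerGraph H).Adj (Sum.inl ((0:Fin 3), W 1 j0 - W 1 j1 + W 0 j1))
        (Sum.inr (j1, W 1 j0 - W 1 j1)) :=
      tanner_adj_aux H (hE _ _ _ _ (by ring))
    have h33 : (tannerGraph H).Adj (Sum.inl ((0:Fin 3), W 1 j0 - W 1 j1 + W 0 j1))
        (Sum.inr (j0, W 1 j0 - W 1 j1 + W 0 j1 - W 0 j0)) :=
      tanner_adj_aux H (hE _ _ _ _ (by ring))
    have h43 : (tannerGraph H).Adj (Sum.inl ((1:Fin 3), W 0 j0 + W 1 j1 - W 0 j1))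
        (Sum.inr (j0, W 1 j0 - W 1 j1 + W 0 j1 - W 0 j0)) :=
      tanner_adj_aux H (hE _ _ _ _
        (by linear_combination (W 0 j0 + W 1 j1 - W 0 j1 - W 1 j0) * h2))
    have h44 : (tannerGraph H).Adj (Sum.inl ((1:Fin 3), W 0 j0 + W 1 j1 - W 0 j1))
        (Sum.inr (j1, W 0 j0 - W 0 j1)) :=
      tanner_adj_aux H (hE _ _ _ _ (by ring))
    have h14 : (tannerGraph H).Adj (Sum.inl ((0:Fin 3), W 0 j0))
        (Sum.inr (j1, W 0 j0 - W 0 j1)) :=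
      tanner_adj_aux H (hE _ _ _ _ (by ring))
    have hne13 : W 0 j0 ≠ W 1 j0 - W 1 j1 + W 0 j1 :=
      fun h => hδ (by linear_combination h + (W 0 j1 + W 1 j0) * h2)
    have hne24 : W 1 j0 ≠ W 0 j0 + W 1 j1 - W 0 j1 :=
      fun h => hδ (by linear_combination -h + (W 0 j1 + W 1 j0) * h2)
    have hnes13 : (0:F) ≠ W 1 j0 - W 1 j1 + W 0 j1 - W 0 j0 :=
      fun h => hδ (by linear_combination -h + (W 0 j0 + W 1 j1) * h2)
    have hnes24 : W 1 j0 - W 1 j1 ≠ W 0 j0 - W 0 j1 :=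
      fun h => hδ (by linear_combination h + (W 0 j0 + W 1 j1) * h2)
    refine ⟨_, SimpleGraph.Walk.cons h11 (SimpleGraph.Walk.cons h21.symm
        (SimpleGraph.Walk.cons h22 (SimpleGraph.Walk.cons h32.symm
        (SimpleGraph.Walk.cons h33 (SimpleGraph.Walk.cons h43.symm
        (SimpleGraph.Walk.cons h44 (SimpleGraph.Walk.cons h14.symm
        SimpleGraph.Walk.nil))))))), ?_, by simp⟩
    rw [SimpleGraph.Walk.cons_isCycle_iff]
    refine ⟨?_, ?_⟩
    · simp [SimpleGraph.Walk.cons_isPath_iff, j0, j1, hne13, hne24, hnes13, hnes24,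
        hne13.symm, hne24.symm, hnes13.symm, hnes24.symm]
    · simp [j0, j1, hne13, hne24, hnes13, hnes24, hne13.symm, hne24.symm, hnes13.symm,
        hnes24.symm]
end
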